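/- Let f : ℝ^d → ℝ be convex and differentiable with L-Lipschitz gradient, X convex, x* a minimizer of f over X, and let x(1), x(2), …, x(T+1) be any sequence in X. Then for any integer τ ≥ 0 (with the convention x(s) = x(1) for s ≤ 0), Σ_{t=1}^{T} ⟨∇f(x(t)) − ∇f(x(t−τ)), x(t+1) − x*⟩ ≤ Σ_{t=T−τ+1}^{T} D_f(x*, x(t)) + (L/2)·Σ_{t=1}^{T} ‖x(t−τ) − x(t+1)‖², where D_f(x, y) = f(x) − f(y) − ⟨∇f(y), x − y⟩. -/

import Mathlib

/-! Each summand is split by the four-point identity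
`⟪∇f a - ∇f b, c - d⟫ = D(d, a) - D(d, b) - D(c, a) + D(c, b)` with `a = x t`, `b = x (t - τ)`,
`c = x (t + 1)`, `d = x*`. Convexity gives `D(c, a) ≥ 0` and smoothness `D(c, b) ≤ L/2 ‖b - c‖²`,
leaving `D(x*, x t) - D(x*, x (t - τ))`, whose sum over `t` telescopes, up to nonnegative terms,
to the last `τ` divergences. -/

open RealInnerProductSpace Finset

theorem sum_Icc_sub_delayed_le {α : Type*} [AddCommGroup α] [PartialOrder α]
    [IsOrderedAddMonoid α] {g : ℕ → α} (hg : ∀ t, 0 ≤ g t) (T τ : ℕ) :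
    ∑ t ∈ Icc 1 T, (g t - g (t - τ)) ≤ ∑ t ∈ Icc (T - τ + 1) T, g t := by
  have hsplit : ∑ t ∈ Icc 1 T, g t =
      ∑ t ∈ Icc 1 (T - τ), g t + ∑ t ∈ Icc (T - τ + 1) T, g t := by
    rw [← sum_union (disjoint_left.2 fun t h₁ h₂ => by simp only [mem_Icc] at h₁ h₂; omega)]
    congr 1; ext t; simp only [mem_union, mem_Icc]; omega
  have hshift : ∑ t ∈ Icc 1 (T - τ), g t ≤ ∑ t ∈ Icc 1 T, g (t - τ) :=
    calc ∑ t ∈ Icc 1 (T - τ), g t = ∑ t ∈ Icc (1 + τ) (T - τ + τ), g (t - τ) := by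
          rw [← map_add_right_Icc, sum_map]; simp
      _ ≤ ∑ t ∈ Icc 1 T, g (t - τ) :=
          sum_le_sum_of_subset_of_nonneg (fun t ht => by simp only [mem_Icc] at ht ⊢; omega)
            fun t _ _ => hg _
  rw [sum_sub_distrib, hsplit, sub_le_iff_le_add']
  exact add_le_add_left hshift _

open AffineMap (lineMap lineMap_apply_zero lineMap_apply_one lineMap_vsub_left)

section InnerProductSpace

variable {E : Type*} [NormedAddCommGroup E] [InnerProductSpace ℝ E]

def bregmanDiv (f : E → ℝ) (f' : E → E) (x y : E) : ℝ :=
  f x - f y - ⟪f' y, x - y⟫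

theorem inner_sub_sub_eq_bregmanDiv (f : E → ℝ) (f' : E → E) (a b c d : E) :
    ⟪f' a - f' b, c - d⟫ =
      bregmanDiv f f' d a - bregmanDiv f f' d b - bregmanDiv f f' c a + bregmanDiv f f' c b := by
  simp only [bregmanDiv, inner_sub_left, inner_sub_right]
  ring

variable [CompleteSpace E] {f : E → ℝ} {f' : E → E}

theorem HasGradientAt.hasDerivAt_comp_lineMap {g y z : E} {s : ℝ}
    (h : HasGradientAt f g (lineMap y z s)) :
    HasDerivAt (fun s : ℝ => f (lineMap y z s)) ⟪g, z - y⟫ s :=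
  h.hasFDerivAt.comp_hasDerivAt s AffineMap.hasDerivAt_lineMap

theorem ConvexOn.bregmanDiv_nonneg (hf : ConvexOn ℝ Set.univ f) {y : E}
    (hy : HasGradientAt f (f' y) y) (x : E) : 0 ≤ bregmanDiv f f' x y := by
  have hline : ConvexOn ℝ Set.univ (fun s : ℝ => f (lineMap y x s)) :=
    hf.comp_affineMap (lineMap y x)
  have hderiv : HasDerivAt (fun s : ℝ => f (lineMap y x s)) ⟪f' y, x - y⟫ 0 :=
    HasGradientAt.hasDerivAt_comp_lineMap (by rwa [lineMap_apply_zero])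
  have := hline.le_slope_of_hasDerivAt (Set.mem_univ 0) (Set.mem_univ 1) one_pos hderiv
  simp only [slope_def_field, lineMap_apply_zero, lineMap_apply_one, sub_zero, div_one] at this
  rw [bregmanDiv]
  linarith

theorem bregmanDiv_le_of_lipschitz_gradient (hf : ∀ x, HasGradientAt f (f' x) x) {L : ℝ} {y : E}
    (hlip : ∀ x, ‖f' x - f' y‖ ≤ L * ‖x - y‖) (z : E) :
    bregmanDiv f f' z y ≤ L / 2 * ‖z - y‖ ^ 2 := by
  -- `φ' ≤ 0` on `[0, 1]` by the Lipschitz bound, and `φ 1 ≤ φ 0` is the claim.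
  set φ : ℝ → ℝ := fun s => f (lineMap y z s) - s * ⟪f' y, z - y⟫ - L / 2 * s ^ 2 * ‖z - y‖ ^ 2
  have hφ' : ∀ s, HasDerivAt φ (⟪f' (lineMap y z s) - f' y, z - y⟫ - L * s * ‖z - y‖ ^ 2) s := by
    intro s
    refine ((((hf (lineMap y z s)).hasDerivAt_comp_lineMap).sub
      ((hasDerivAt_id s).mul_const ⟪f' y, z - y⟫)).sub
      (((hasDerivAt_pow 2 s).const_mul (L / 2)).mul_const (‖z - y‖ ^ 2))).congr_deriv ?_
    simp only [inner_sub_left, Nat.cast_ofNat]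
    ring
  have hφ'_nonpos : ∀ s ∈ interior (Set.Icc (0 : ℝ) 1),
      ⟪f' (lineMap y z s) - f' y, z - y⟫ - L * s * ‖z - y‖ ^ 2 ≤ 0 := by
    intro s hs
    rw [interior_Icc] at hs
    rw [sub_nonpos]
    have hdist : ‖lineMap y z s - y‖ = s * ‖z - y‖ := by
      rw [← vsub_eq_sub, lineMap_vsub_left, norm_smul, Real.norm_of_nonneg hs.1.le, vsub_eq_sub]
    calc ⟪f' (lineMap y z s) - f' y, z - y⟫ ≤ ‖f' (lineMap y z s) - f' y‖ * ‖z - y‖ :=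
          real_inner_le_norm _ _
      _ ≤ L * ‖lineMap y z s - y‖ * ‖z - y‖ := by gcongr; exact hlip _
      _ = L * s * ‖z - y‖ ^ 2 := by rw [hdist]; ring
  have hanti : AntitoneOn φ (Set.Icc 0 1) :=
    antitoneOn_of_hasDerivWithinAt_nonpos (convex_Icc 0 1)
      (fun s _ => (hφ' s).continuousAt.continuousWithinAt)
      (fun s _ => (hφ' s).hasDerivWithinAt) hφ'_nonpos
  have h10 := hanti (Set.left_mem_Icc.2 zero_le_one) (Set.right_mem_Icc.2 zero_le_one) zero_le_one
  simp only [φ, lineMap_apply_zero, lineMap_apply_one] at h10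
  rw [bregmanDiv]
  linarith

theorem inner_gradient_sub_gradient_le (hconv : ConvexOn ℝ Set.univ f)
    (hf : ∀ x, HasGradientAt f (f' x) x) {L : ℝ} {b : E}
    (hlip : ∀ x, ‖f' x - f' b‖ ≤ L * ‖x - b‖) (a c d : E) :
    ⟪f' a - f' b, c - d⟫ ≤
      bregmanDiv f f' d a - bregmanDiv f f' d b + L / 2 * ‖b - c‖ ^ 2 := by
  rw [inner_sub_sub_eq_bregmanDiv f, norm_sub_rev]
  linarith [hconv.bregmanDiv_nonneg (hf a) c, bregmanDiv_le_of_lipschitz_gradient hf hlip c]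

end InnerProductSpace

theorem delayed_gradient_error_bound_general {n : ℕ}
    (f : EuclideanSpace ℝ (Fin n) → ℝ)
    (f' : EuclideanSpace ℝ (Fin n) → EuclideanSpace ℝ (Fin n))
    (hconv : ConvexOn ℝ Set.univ f)
    (hdiff : ∀ x, HasGradientAt f (f' x) x)
    (L : ℝ) (hlip : ∀ x y, ‖f' x - f' y‖ ≤ L * ‖x - y‖)
    (xstar : EuclideanSpace ℝ (Fin n))
    (x : ℕ → EuclideanSpace ℝ (Fin n))
    (T τ : ℕ) :
    ∑ t ∈ Finset.Icc 1 T, ⟪f' (x t) - f' (x (t - τ)), x (t + 1) - xstar⟫ ≤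
      (∑ t ∈ Finset.Icc (T - τ + 1) T,
        (f xstar - f (x t) - ⟪f' (x t), xstar - x t⟫))
      + (L / 2) * ∑ t ∈ Finset.Icc 1 T, ‖x (t - τ) - x (t + 1)‖ ^ 2 := by
  set D : ℕ → ℝ := fun t => bregmanDiv f f' xstar (x t)
  have hD : ∀ t, 0 ≤ D t := fun t => hconv.bregmanDiv_nonneg (hdiff _) _
  calc ∑ t ∈ Icc 1 T, ⟪f' (x t) - f' (x (t - τ)), x (t + 1) - xstar⟫
      ≤ ∑ t ∈ Icc 1 T, (D t - D (t - τ) + L / 2 * ‖x (t - τ) - x (t + 1)‖ ^ 2) :=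
        sum_le_sum fun t _ => inner_gradient_sub_gradient_le hconv hdiff (hlip · _) _ _ _
    _ = ∑ t ∈ Icc 1 T, (D t - D (t - τ)) +
          L / 2 * ∑ t ∈ Icc 1 T, ‖x (t - τ) - x (t + 1)‖ ^ 2 := by
        rw [sum_add_distrib, mul_sum]
    _ ≤ ∑ t ∈ Icc (T - τ + 1) T, D t + L / 2 * ∑ t ∈ Icc 1 T, ‖x (t - τ) - x (t + 1)‖ ^ 2 := by
        gcongr ?_ + _
        exact sum_Icc_sub_delayed_le hD T τ

/-- Deterministic part of the delayed-gradient error bound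
(first claim of Lemma: gradient differencing terms are second order). -/
theorem delayed_gradient_error_bound {n : ℕ}
    (X : Set (EuclideanSpace ℝ (Fin n))) (hXconv : Convex ℝ X)
    (f : EuclideanSpace ℝ (Fin n) → ℝ)
    (f' : EuclideanSpace ℝ (Fin n) → EuclideanSpace ℝ (Fin n))
    (hconv : ConvexOn ℝ Set.univ f)
    (hdiff : ∀ x, HasGradientAt f (f' x) x)
    (L : ℝ) (hlip : ∀ x y, ‖f' x - f' y‖ ≤ L * ‖x - y‖)
    (xstar : EuclideanSpace ℝ (Fin n)) (hxstar : xstar ∈ X)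
    (hmin : ∀ x ∈ X, f xstar ≤ f x)
    (x : ℕ → EuclideanSpace ℝ (Fin n)) (hx : ∀ t, x t ∈ X)
    (hconvention : x 0 = x 1)
    (T τ : ℕ) :
    ∑ t ∈ Finset.Icc 1 T, ⟪f' (x t) - f' (x (t - τ)), x (t + 1) - xstar⟫ ≤
      (∑ t ∈ Finset.Icc (T - τ + 1) T,
        (f xstar - f (x t) - ⟪f' (x t), xstar - x t⟫))
      + (L / 2) * ∑ t ∈ Finset.Icc 1 T, ‖x (t - τ) - x (t + 1)‖ ^ 2 :=
  delayed_gradient_error_bound_general f f' hconv hdiff L hlip xstar x T τ
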